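/- For X tangent to M_r, writing Y = X - η(X)ξ one has φ'Y = -νX - η(X)N (octonion products), and the structure tensor φ' differs from the naturally induced tensor φ (given by φX = JX - η(X)ν) on vectors orthogonal to ξ. -/

import Mathlib

/- Common setup: ℝ⁷ ≅ pure imaginary octonions 𝔆₊ (0-based indices: eᵢ ↦ i-1),
   octonion cross product x × y = xy + ⟨x,y⟩·1 given by the Fano triples
   (e₁e₂=e₃, e₁e₄=e₅, e₁e₆=e₇, e₂e₅=e₇, e₃e₄=e₇, e₃e₅=e₆, e₂e₆=e₄),
   the hypersurfaces M_r = S⁶ ∩ {x₇ = r}, the unit normal ν of M_r in S⁶,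
   the vector field ξ = -N × ν, its dual 1-form η and dη
   (with the convention dη(X,Y) = ½(Xη(Y) - Yη(X) - η([X,Y]))). -/

noncomputable section

open scoped RealInnerProductSpace

abbrev E7 : Type := EuclideanSpace ℝ (Fin 7)
abbrev E6 : Type := EuclideanSpace ℝ (Fin 6)

/-- Octonion cross product on pure imaginary octonions 𝔆₊ ≅ ℝ⁷. -/
def cross (u v : E7) : E7 := WithLp.toLp 2 fun k =>
  if k = 0 then u 1 * v 2 - u 2 * v 1 + (u 3 * v 4 - u 4 * v 3) + (u 5 * v 6 - u 6 * v 5)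
  else if k = 1 then u 2 * v 0 - u 0 * v 2 + (u 4 * v 6 - u 6 * v 4) + (u 5 * v 3 - u 3 * v 5)
  else if k = 2 then u 0 * v 1 - u 1 * v 0 + (u 3 * v 6 - u 6 * v 3) + (u 4 * v 5 - u 5 * v 4)
  else if k = 3 then u 4 * v 0 - u 0 * v 4 + (u 6 * v 2 - u 2 * v 6) + (u 1 * v 5 - u 5 * v 1)
  else if k = 4 then u 0 * v 3 - u 3 * v 0 + (u 6 * v 1 - u 1 * v 6) + (u 5 * v 2 - u 2 * v 5)
  else if k = 5 then u 6 * v 0 - u 0 * v 6 + (u 2 * v 4 - u 4 * v 2) + (u 3 * v 1 - u 1 * v 3)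
  else u 0 * v 5 - u 5 * v 0 + (u 1 * v 4 - u 4 * v 1) + (u 2 * v 3 - u 3 * v 2)

/-- The hypersurface M_r = S⁶ ∩ {x₇ = r} = {Σᵢ₌₁⁶ xᵢeᵢ + re₇ : Σᵢ₌₁⁶ xᵢ² = 1 - r²}. -/
def Mr (r : ℝ) : Set E7 := {x | x 6 = r ∧ ∑ i : Fin 6, x i.castSucc ^ 2 = 1 - r ^ 2}

/-- The unit normal ν of M_r in S⁶ : ν_x = (r/√(1-r²)) Σᵢ₌₁⁶ xᵢeᵢ - √(1-r²) e₇. -/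
def nu (r : ℝ) (x : E7) : E7 := WithLp.toLp 2 fun i =>
  if i = 6 then -Real.sqrt (1 - r ^ 2) else (r / Real.sqrt (1 - r ^ 2)) * x i

/-- ξ = -N × ν = (1/√(1-r²))(x₆e₁ + x₅e₂ + x₄e₃ - x₃e₄ - x₂e₅ - x₁e₆). -/
def xi (r : ℝ) (x : E7) : E7 := WithLp.toLp 2 fun i =>
  (1 / Real.sqrt (1 - r ^ 2)) *
    (if i = 0 then x 5 else if i = 1 then x 4 else if i = 2 then x 3
     else if i = 3 then -x 2 else if i = 4 then -x 1 else if i = 5 then -x 0 else 0)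

/-- The 1-form η dual to ξ:
η = (1/√(1-r²))(x₆dx₁ + x₅dx₂ + x₄dx₃ - x₃dx₄ - x₂dx₅ - x₁dx₆). -/
def eta (r : ℝ) (x v : E7) : ℝ :=
  (1 / Real.sqrt (1 - r ^ 2)) *
    (x 5 * v 0 + x 4 * v 1 + x 3 * v 2 - x 2 * v 3 - x 1 * v 4 - x 0 * v 5)

/-- dη = -(2/√(1-r²))(dx₁∧dx₆ + dx₂∧dx₅ + dx₃∧dx₄), with the convention
dη(X,Y) = ½(Xη(Y) - Yη(X) - η([X,Y])), i.e. (dxᵢ∧dxⱼ)(u,v) = ½(uᵢvⱼ - uⱼvᵢ). -/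
def deta (r : ℝ) (u v : E7) : ℝ :=
  -(1 / Real.sqrt (1 - r ^ 2)) *
    (u 0 * v 5 - u 5 * v 0 + (u 1 * v 4 - u 4 * v 1) + (u 2 * v 3 - u 3 * v 2))

/-- The tangent space T_xM_r = {v : v₇ = 0, ⟨v,x⟩ = 0} (as a predicate). -/
def TangentMr (x v : E7) : Prop := v 6 = 0 ∧ ⟪v, x⟫ = 0

/-- Octonion multiplication on 𝔆 = ℝ ⊕ 𝔆₊. -/
def omul (x y : ℝ × E7) : ℝ × E7 :=
  (x.1 * y.1 - ⟪x.2, y.2⟫, x.1 • y.2 + y.1 • x.2 + cross x.2 y.2)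

/-- The naturally induced structure tensor φX = JX - η(X)ν, J_x v = x × v. -/
def phi (r : ℝ) (x v : E7) : E7 := cross x v - eta r x v • nu r x

/-
`ν` is a unit vector orthogonal to the position vector `N`, so the double cross product identity
`a × (a × b) = ⟨a, b⟩ a - |a|² b` turns `ξ = -N × ν` into `ν × ξ = -N`. Since moreover `⟨ν, X⟩ = 0`
for `X` tangent to `M_r`, the octonion product `νX = -⟨ν, X⟩ + ν × X` is the pure vector `ν × X`,
and the formula follows by linearity. At `N = √(1 - r²) e₁ + r e₇` and `X = e₂ ⊥ ξ` one has
`φX = N × X = √(1 - r²) e₃ + r e₅` but `-ν × X = -r e₃ + √(1 - r²) e₅`.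
-/

lemma mem_Mr_iff {r : ℝ} {x : E7} :
    x ∈ Mr r ↔ x 6 = r ∧ x 0 ^ 2 + x 1 ^ 2 + x 2 ^ 2 + x 3 ^ 2 + x 4 ^ 2 + x 5 ^ 2 = 1 - r ^ 2 := by
  simp only [Mr, Set.mem_ofPred_eq, Fin.sum_univ_six]
  rfl

lemma inner_eq_sum_seven (u v : E7) :
    ⟪u, v⟫ = u 0 * v 0 + u 1 * v 1 + u 2 * v 2 + u 3 * v 3 + u 4 * v 4 + u 5 * v 5 + u 6 * v 6 := by
  simp only [PiLp.inner_apply, RCLike.inner_apply, conj_trivial, Fin.sum_univ_seven]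
  ring

lemma cross_swap (u v : E7) : cross v u = -cross u v := by
  ext k
  simp only [cross, PiLp.neg_apply]
  split_ifs <;> ring

lemma cross_sub_right (u v w : E7) : cross u (v - w) = cross u v - cross u w := by
  ext k
  simp only [cross, PiLp.sub_apply]
  split_ifs <;> ring

lemma cross_smul_right (u : E7) (c : ℝ) (v : E7) : cross u (c • v) = c • cross u v := by
  ext k
  simp only [cross, PiLp.smul_apply, smul_eq_mul]
  split_ifs <;> ring

lemma cross_cross_self (a b : E7) : cross a (cross a b) = ⟪a, b⟫ • a - ⟪a, a⟫ • b := by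
  ext k
  simp only [cross, inner_eq_sum_seven, PiLp.sub_apply, PiLp.smul_apply, smul_eq_mul]
  fin_cases k <;> simp <;> ring

lemma omul_pure (a b : E7) : omul (0, a) (0, b) = (-⟪a, b⟫, cross a b) := by
  simp only [omul, zero_mul, zero_sub, zero_smul, zero_add, add_zero]

section Hypersurface

variable {r : ℝ} {x : E7}

lemma inner_nu_eq_zero_of_tangentMr {X : E7} (hX : TangentMr x X) : ⟪nu r x, X⟫ = 0 := by
  obtain ⟨hX6, hXx⟩ := hX
  rw [inner_eq_sum_seven] at hXx ⊢
  simp only [Fin.isValue, hX6, zero_mul, add_zero, nu, Fin.reduceEq, ↓reduceIte, mul_zero] at hXx ⊢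
  linear_combination r / Real.sqrt (1 - r ^ 2) * hXx

variable (hr : r ^ 2 < 1) (hx : x ∈ Mr r)
include hr hx

lemma inner_nu_self : ⟪nu r x, nu r x⟫ = 1 := by
  obtain ⟨-, hsum⟩ := mem_Mr_iff.1 hx
  have hs : Real.sqrt (1 - r ^ 2) ^ 2 = 1 - r ^ 2 := Real.sq_sqrt (by linarith)
  have hs0 : Real.sqrt (1 - r ^ 2) ≠ 0 := by positivity
  rw [inner_eq_sum_seven]
  simp only [Fin.isValue, nu, Fin.reduceEq, ↓reduceIte, mul_neg, neg_mul, neg_neg]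
  field_simp
  linear_combination r ^ 2 * hsum + (Real.sqrt (1 - r ^ 2) ^ 2 - r ^ 2) * hs

lemma inner_nu_position : ⟪nu r x, x⟫ = 0 := by
  obtain ⟨hx6, hsum⟩ := mem_Mr_iff.1 hx
  have hs : Real.sqrt (1 - r ^ 2) ^ 2 = 1 - r ^ 2 := Real.sq_sqrt (by linarith)
  have hs0 : Real.sqrt (1 - r ^ 2) ≠ 0 := by positivity
  rw [inner_eq_sum_seven]
  simp only [Fin.isValue, nu, Fin.reduceEq, ↓reduceIte, hx6, neg_mul]
  field_simp
  linear_combination r * hsum - r * hs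

lemma xi_eq_neg_cross_nu : xi r x = -cross x (nu r x) := by
  obtain ⟨hx6, -⟩ := mem_Mr_iff.1 hx
  have hs : Real.sqrt (1 - r ^ 2) ^ 2 = 1 - r ^ 2 := Real.sq_sqrt (by linarith)
  have hs0 : Real.sqrt (1 - r ^ 2) ≠ 0 := by positivity
  ext k
  fin_cases k <;> simp [xi, cross, nu, hx6] <;> field_simp <;> grind

lemma cross_nu_xi : cross (nu r x) (xi r x) = -x := by
  rw [xi_eq_neg_cross_nu hr hx, ← cross_swap, cross_cross_self, inner_nu_position hr hx,
    inner_nu_self hr hx, zero_smul, one_smul, zero_sub]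

lemma neg_cross_nu_sub_eta_smul_xi {X : E7} (hX : TangentMr x X) :
    ((0 : ℝ), -cross (nu r x) (X - eta r x X • xi r x))
      = -omul (0, nu r x) (0, X) - eta r x X • ((0 : ℝ), x) := by
  rw [omul_pure, inner_nu_eq_zero_of_tangentMr hX, cross_sub_right, cross_smul_right,
    cross_nu_xi hr hx]
  refine Prod.ext (by simp) ?_
  simp only [Prod.snd_sub, Prod.snd_neg, Prod.smul_snd]
  module

end Hypersurface

lemma exists_phi_ne_neg_cross_nu {r : ℝ} (hr : r ^ 2 < 1) :
    ∃ y ∈ Mr r, ∃ X : E7, TangentMr y X ∧ ⟪X, xi r y⟫ = 0 ∧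
      phi r y X ≠ -cross (nu r y) X := by
  have hs : Real.sqrt (1 - r ^ 2) ^ 2 = 1 - r ^ 2 := Real.sq_sqrt (by linarith)
  have hs0 : 0 < Real.sqrt (1 - r ^ 2) := by positivity
  refine ⟨WithLp.toLp 2 ![Real.sqrt (1 - r ^ 2), 0, 0, 0, 0, 0, r], mem_Mr_iff.2 ⟨rfl, by simp [hs]⟩,
    WithLp.toLp 2 ![0, 1, 0, 0, 0, 0, 0], ⟨rfl, by simp [inner_eq_sum_seven]⟩,
    by simp [inner_eq_sum_seven, xi], fun h => ?_⟩
  have h2 := congrArg (· 2) h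
  have h4 := congrArg (· 4) h
  simp only [Fin.isValue, phi, cross, Matrix.cons_val_one, Matrix.cons_val_zero, Matrix.cons_val,
    mul_zero, mul_one, sub_self, add_zero, sub_zero, zero_add, ite_self, eta, one_div, nu, zero_smul,
    Fin.reduceEq, ↓reduceIte, PiLp.neg_apply, neg_neg] at h2 h4
  rw [div_mul_cancel₀ r hs0.ne'] at h2
  linarith

/-- for X tangent to M_r and Y = X - η(X)ξ one has
φ'Y = -νX - η(X)N (octonion products, computed in 𝔆 = ℝ ⊕ 𝔆₊), and the
tensor φ' differs from the naturally induced tensor φ on vectors ⊥ ξ. -/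
theorem stmt16 (r : ℝ) (hr : -1 < r ∧ r < 1) :
    (∀ x ∈ Mr r, ∀ X : E7, TangentMr x X →
      ((0 : ℝ), -cross (nu r x) (X - eta r x X • xi r x))
        = -omul (0, nu r x) (0, X) - eta r x X • ((0 : ℝ), x)) ∧
    ∃ y ∈ Mr r, ∃ X : E7, TangentMr y X ∧ ⟪X, xi r y⟫ = 0 ∧
      phi r y X ≠ -cross (nu r y) X := by
  have hr2 : r ^ 2 < 1 := by nlinarith [hr.1, hr.2]
  exact ⟨fun x hx X hX => neg_cross_nu_sub_eta_smul_xi hr2 hx hX, exists_phi_ne_neg_cross_nu hr2⟩
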